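/- arXiv:1911.07052 — 4 statements merged into one kernel-verified Lean document; each statement's English description precedes it below -/
import Mathlib

section
/- Let λ > 0, α > 0 and let m be a positive integer. Then the function t ↦ E_{α,1}(−λ t^α) is m times differentiable on (0, ∞) and its m-th derivative satisfies d^m/dt^m E_{α,1}(−λ t^α) = −λ t^{α−m} E_{α,α−m+1}(−λ t^α) for every t > 0. -/
/-- The real Mittag-Leffler function `E_{a,b}(x) = ∑_{k=0}^∞ x^k / Γ(ka + b)`, with the
convention that a term is `0` when `ka + b` is a nonpositive integer. -/
noncomputable def mlReal (a b x : ℝ) : ℝ :=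
  ∑' k : ℕ, x ^ k / Real.Gamma ((k : ℝ) * a + b)

open Real Set


-- Γ(x) ≥ n! for x ≥ n+2
lemma gamma_ge_fact (n : ℕ) {x : ℝ} (hx : (n:ℝ) + 2 ≤ x) : (n.factorial : ℝ) ≤ Real.Gamma x := by
  have h1 : Real.Gamma ((n:ℝ) + 2) ≤ Real.Gamma x := by
    rcases eq_or_lt_of_le hx with h | h
    · rw [h]
    · exact le_of_lt (Real.Gamma_strictMonoOn_Ici (by simp [mem_Ici]) (le_trans (by simp [mem_Ici]) hx) h)
  calc (n.factorial : ℝ) ≤ ((n+1).factorial : ℝ) := by exact_mod_cast Nat.factorial_le (Nat.le_succ n)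
    _ = Real.Gamma ((n:ℝ) + 2) := by
        rw [show ((n:ℝ) + 2) = ((n+1 : ℕ):ℝ) + 1 by push_cast; ring, Real.Gamma_nat_eq_factorial]
    _ ≤ Real.Gamma x := h1

-- x / Γ(x+1) = 1 / Γ(x)
lemma div_gamma_succ (x : ℝ) : x / Real.Gamma (x + 1) = 1 / Real.Gamma x := by
  rcases eq_or_ne x 0 with rfl | hx
  · simp [Real.Gamma_zero]
  · rw [Real.Gamma_add_one hx, show x / (x * Real.Gamma x) = x * 1 / (x * Real.Gamma x) by ring,
      mul_div_mul_left _ _ hx]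

lemma summable_aux {a : ℝ} (ha : 0 < a) (c r : ℝ) (hr : 0 ≤ r) :
    Summable (fun k : ℕ => r ^ k * |1 / Real.Gamma ((k:ℝ) * a + c)|) := by
  have hbase : (0:ℝ) ≤ 2*r+1 := by linarith
  obtain ⟨R, hR1, hRa⟩ : ∃ R : ℝ, 1 ≤ R ∧ 2*r + 1 ≤ R ^ a := by
    refine ⟨max 1 ((2*r+1) ^ (1/a)), le_max_left _ _, ?_⟩
    calc 2*r+1 = ((2*r+1) ^ (1/a)) ^ a := by
          rw [← Real.rpow_mul hbase, one_div, inv_mul_cancel₀ (ne_of_gt ha), Real.rpow_one]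
      _ ≤ (max 1 ((2*r+1) ^ (1/a))) ^ a :=
          Real.rpow_le_rpow (Real.rpow_nonneg hbase _) (le_max_right _ _) ha.le
  have hR0 : 0 < R := lt_of_lt_of_le one_pos hR1
  have hRa0 : 0 < R ^ a := Real.rpow_pos_of_pos hR0 a
  have hhalf : r / R ^ a ≤ 1/2 := by
    rw [div_le_div_iff₀ hRa0 two_pos]; linarith
  set C : ℝ := Real.exp R * R ^ (3 - c) with hC
  have hC0 : 0 ≤ C := mul_nonneg (Real.exp_pos R).le (Real.rpow_pos_of_pos hR0 _).le
  have key : ∀ k : ℕ, 3 ≤ (k:ℝ)*a + c →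
      r ^ k * |1 / Real.Gamma ((k:ℝ)*a + c)| ≤ C * (1/2) ^ k := by
    intro k hk
    set x : ℝ := (k:ℝ)*a + c with hx
    have hx0 : (0:ℝ) ≤ x := by linarith
    set n : ℕ := ⌊x⌋₊ - 2 with hn
    have h3 : 3 ≤ ⌊x⌋₊ := Nat.le_floor (by exact_mod_cast hk)
    have hn2 : (n:ℝ) + 2 = (⌊x⌋₊ : ℝ) := by
      have : n + 2 = ⌊x⌋₊ := Nat.sub_add_cancel (by omega)
      exact_mod_cast this
    have hnx : (n:ℝ) + 2 ≤ x := hn2 ▸ Nat.floor_le hx0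
    have hxn : x - 3 ≤ (n:ℝ) := by
      have := Nat.lt_floor_add_one x
      have : x < (n:ℝ) + 2 + 1 := by rw [hn2]; exact this
      linarith
    have hGamma : (n.factorial : ℝ) ≤ Real.Gamma x := gamma_ge_fact n hnx
    have hfact0 : (0:ℝ) < n.factorial := by exact_mod_cast n.factorial_pos
    have hG0 : 0 < Real.Gamma x := lt_of_lt_of_le hfact0 hGamma
    have habs : |1 / Real.Gamma x| ≤ 1 / (n.factorial : ℝ) := by
      rw [abs_of_pos (by positivity)]
      exact one_div_le_one_div_of_le hfact0 hGamma
    have hfe : R ^ n / (n.factorial : ℝ) ≤ Real.exp R := by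
      exact_mod_cast Real.pow_div_factorial_le_exp R hR0.le n
    have h1n : 1 / (n.factorial:ℝ) ≤ Real.exp R / R ^ n := by
      rw [div_le_div_iff₀ hfact0 (by positivity)]
      calc (1:ℝ) * R ^ n = R ^ n := one_mul _
        _ ≤ Real.exp R * n.factorial := by
            rw [div_le_iff₀ hfact0] at hfe; linarith
    have hpow : R ^ (x - 3) ≤ (R:ℝ) ^ n := by
      rw [← Real.rpow_natCast R n]
      exact Real.rpow_le_rpow_of_exponent_le hR1 hxn
    calc r ^ k * |1 / Real.Gamma x| ≤ r ^ k * (Real.exp R / R ^ n) := by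
          apply mul_le_mul_of_nonneg_left _ (pow_nonneg hr k)
          exact le_trans habs h1n
      _ ≤ r ^ k * (Real.exp R / R ^ (x - 3)) := by
          apply mul_le_mul_of_nonneg_left _ (pow_nonneg hr k)
          apply div_le_div_of_nonneg_left (Real.exp_pos R).le (Real.rpow_pos_of_pos hR0 _) hpow
      _ = C * (r / R ^ a) ^ k := by
          have e1 : ((R ^ a) ^ k : ℝ) = R ^ ((k:ℝ)*a) := by
            rw [← Real.rpow_natCast (R ^ a) k, ← Real.rpow_mul hR0.le, mul_comm]
          have hne1 : R ^ ((k:ℝ)*a) ≠ 0 := (Real.rpow_pos_of_pos hR0 _).ne'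
          have hne2 : R ^ (3 - c) ≠ 0 := (Real.rpow_pos_of_pos hR0 _).ne'
          rw [hC, div_pow, e1, show x - 3 = (k:ℝ)*a - (3-c) by rw [hx]; ring,
            Real.rpow_sub hR0]
          field_simp
      _ ≤ C * (1/2) ^ k := by
          apply mul_le_mul_of_nonneg_left _ hC0
          exact pow_le_pow_left₀ (by positivity) hhalf k
  have hsum : Summable (fun k : ℕ => C * (1/2:ℝ)^k) :=
    (summable_geometric_of_lt_one (by norm_num) (by norm_num)).mul_left C
  set K : ℕ := ⌈(3 - c)/a⌉₊ with hK
  have hKk : ∀ k : ℕ, 3 ≤ ((k+K:ℕ):ℝ)*a + c := by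
    intro k
    have h1 : (3 - c)/a ≤ (K:ℝ) := Nat.le_ceil _
    have h2 : 3 - c ≤ (K:ℝ) * a := by rw [div_le_iff₀ ha] at h1; linarith
    have h3 : (K:ℝ) ≤ ((k+K:ℕ):ℝ) := by exact_mod_cast Nat.le_add_left K k
    nlinarith [ha.le]
  apply (summable_nat_add_iff K).mp
  refine Summable.of_nonneg_of_le (fun k => mul_nonneg (pow_nonneg hr _) (abs_nonneg _))
    (fun k => ?_) ((summable_nat_add_iff K).mpr hsum)
  exact key (k+K) (hKk k)

noncomputable def Gfun (lam α b : ℝ) (t : ℝ) : ℝ :=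
  ∑' k : ℕ, ((-lam) ^ k / Real.Gamma ((k:ℝ) * α + b)) * t ^ ((k:ℝ) * α + b - 1)

lemma rpow_split {α b : ℝ} {t : ℝ} (ht : 0 < t) (k : ℕ) :
    t ^ ((k:ℝ) * α + b - 1) = (t ^ α) ^ k * t ^ (b - 1) := by
  rw [show (k:ℝ)*α + b - 1 = α*(k:ℝ) + (b-1) by ring, Real.rpow_add ht,
    Real.rpow_mul ht.le, Real.rpow_natCast]

lemma term_abs (lam α b : ℝ) (hlam : 0 < lam) {t : ℝ} (ht : 0 < t) (k : ℕ) :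
    |((-lam) ^ k / Real.Gamma ((k:ℝ) * α + b)) * t ^ ((k:ℝ) * α + b - 1)|
      = (lam * t ^ α) ^ k * |1 / Real.Gamma ((k:ℝ) * α + b)| * t ^ (b - 1) := by
  have h1 := rpow_split (α := α) (b := b) ht k
  have h2 : |(-lam) ^ k| = lam ^ k := by
    rw [abs_pow, abs_neg, abs_of_pos hlam]
  rw [div_eq_mul_one_div, h1, abs_mul, abs_mul, abs_mul, h2,
    abs_of_pos (Real.rpow_pos_of_pos ht (b-1)),
    abs_of_pos (pow_pos (Real.rpow_pos_of_pos ht α) k), mul_pow]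
  ring

lemma Gsummable (lam α b : ℝ) (hlam : 0 < lam) (hα : 0 < α) {t : ℝ} (ht : 0 < t) :
    Summable (fun k : ℕ =>
      ((-lam) ^ k / Real.Gamma ((k:ℝ) * α + b)) * t ^ ((k:ℝ) * α + b - 1)) := by
  apply Summable.of_abs
  have h := (summable_aux hα b (lam * t ^ α) (by positivity)).mul_right (t ^ (b-1))
  exact h.congr fun k => (term_abs lam α b hlam ht k).symm

lemma Gderiv (lam α : ℝ) (hlam : 0 < lam) (hα : 0 < α) (b : ℝ) {t : ℝ} (ht : 0 < t) :
    HasDerivAt (Gfun lam α b) (Gfun lam α (b-1) t) t := by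
  have hts : t ∈ Set.Ioo (t/2) (2*t) := ⟨by linarith, by linarith⟩
  have hypos : ∀ y ∈ Set.Ioo (t/2) (2*t), (0:ℝ) < y := fun y hy => by
    have := hy.1; linarith
  set M : ℝ := max ((t/2) ^ (b-2)) ((2*t) ^ (b-2)) with hM
  have hu : Summable (fun k : ℕ =>
      ((lam * (2*t) ^ α) ^ k * |1 / Real.Gamma ((k:ℝ) * α + (b-1))|) * M) :=
    (summable_aux hα (b-1) (lam * (2*t) ^ α) (by positivity)).mul_right M
  have hg : ∀ (k : ℕ) (y : ℝ), y ∈ Set.Ioo (t/2) (2*t) →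
      HasDerivAt (fun z : ℝ => ((-lam) ^ k / Real.Gamma ((k:ℝ)*α + b)) * z ^ ((k:ℝ)*α + b - 1))
        (((-lam) ^ k / Real.Gamma ((k:ℝ)*α + (b-1))) * y ^ ((k:ℝ)*α + (b-1) - 1)) y := by
    intro k y hy
    have hy0 : 0 < y := hypos y hy
    have h := (Real.hasDerivAt_rpow_const (x := y) (p := (k:ℝ)*α + b - 1)
      (Or.inl hy0.ne')).const_mul ((-lam) ^ k / Real.Gamma ((k:ℝ)*α + b))
    refine HasDerivAt.congr_deriv h ?_
    have key : (-lam) ^ k / Real.Gamma ((k:ℝ)*α + b) * ((k:ℝ)*α + b - 1)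
        = (-lam) ^ k / Real.Gamma ((k:ℝ)*α + (b-1)) := by
      have hdg := div_gamma_succ ((k:ℝ)*α + b - 1)
      rw [show (k:ℝ)*α + b - 1 + 1 = (k:ℝ)*α + b by ring] at hdg
      calc (-lam) ^ k / Real.Gamma ((k:ℝ)*α + b) * ((k:ℝ)*α + b - 1)
          = (-lam)^k * (((k:ℝ)*α + b - 1) / Real.Gamma ((k:ℝ)*α + b)) := by ring
        _ = (-lam)^k * (1 / Real.Gamma ((k:ℝ)*α + b - 1)) := by rw [hdg]
        _ = (-lam) ^ k / Real.Gamma ((k:ℝ)*α + (b-1)) := by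
            rw [show (k:ℝ)*α + b - 1 = (k:ℝ)*α + (b-1) by ring]; ring
    rw [show (k:ℝ)*α + (b-1) - 1 = (k:ℝ)*α + b - 1 - 1 by ring, ← key]
    ring
  have hbound : ∀ (k : ℕ) (y : ℝ), y ∈ Set.Ioo (t/2) (2*t) →
      ‖((-lam) ^ k / Real.Gamma ((k:ℝ)*α + (b-1))) * y ^ ((k:ℝ)*α + (b-1) - 1)‖
        ≤ ((lam * (2*t) ^ α) ^ k * |1 / Real.Gamma ((k:ℝ) * α + (b-1))|) * M := by
    intro k y hy
    have hy0 : 0 < y := hypos y hy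
    rw [Real.norm_eq_abs, term_abs lam α (b-1) hlam hy0 k]
    have h1 : (lam * y ^ α) ^ k ≤ (lam * (2*t) ^ α) ^ k := by
      apply pow_le_pow_left₀ (by positivity)
      exact mul_le_mul_of_nonneg_left
        (Real.rpow_le_rpow hy0.le hy.2.le hα.le) hlam.le
    have h2 : y ^ (b-1-1) ≤ M := by
      rcases le_or_gt 0 (b-2) with hb | hb
      · refine le_trans ?_ (le_max_right _ _)
        rw [show b - 1 - 1 = b - 2 by ring]
        exact Real.rpow_le_rpow hy0.le hy.2.le hb
      · refine le_trans ?_ (le_max_left _ _)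
        rw [show b - 1 - 1 = b - 2 by ring]
        exact Real.rpow_le_rpow_of_nonpos (by positivity) hy.1.le hb.le
    calc (lam * y ^ α) ^ k * |1 / Real.Gamma ((k:ℝ)*α + (b-1))| * y ^ (b-1-1)
        ≤ (lam * (2*t) ^ α) ^ k * |1 / Real.Gamma ((k:ℝ)*α + (b-1))| * M := by
          apply mul_le_mul (mul_le_mul h1 (le_refl _) (abs_nonneg _) (by positivity)) h2
            (by positivity) (by positivity)
      _ = ((lam * (2*t) ^ α) ^ k * |1 / Real.Gamma ((k:ℝ) * α + (b-1))|) * M := by ring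
  exact hasDerivAt_tsum_of_isPreconnected hu isOpen_Ioo isPreconnected_Ioo hg hbound hts
    (Gsummable lam α b hlam hα ht) hts

lemma G_eq (lam α b : ℝ) {t : ℝ} (ht : 0 < t) :
    Gfun lam α b t = mlReal α b (-lam * t ^ α) * t ^ (b - 1) := by
  rw [mlReal, ← tsum_mul_right]
  apply tsum_congr; intro k
  rw [rpow_split ht k, mul_pow]
  ring

lemma G_shift (lam α : ℝ) (hlam : 0 < lam) (hα : 0 < α) (m : ℕ) (hm : 0 < m) {t : ℝ}
    (ht : 0 < t) :
    Gfun lam α (1 - m) t = -lam * t ^ (α - m) * mlReal α (α - m + 1) (-lam * t ^ α) := by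
  rw [Gfun, Summable.tsum_eq_zero_add (Gsummable lam α (1 - m) hlam hα ht)]
  have h0 : ((-lam) ^ (0:ℕ) / Real.Gamma (((0:ℕ):ℝ) * α + (1 - m)))
      * t ^ (((0:ℕ):ℝ) * α + (1 - m) - 1) = 0 := by
    have e : ((0:ℕ):ℝ) * α + (1 - (m:ℝ)) = -(((m - 1 : ℕ)):ℝ) := by
      rw [Nat.cast_sub hm]; push_cast; ring
    rw [e, Real.Gamma_neg_nat_eq_zero]
    simp
  rw [h0, zero_add, mlReal, ← tsum_mul_left]
  apply tsum_congr; intro k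
  have e1 : ((k+1:ℕ):ℝ) * α + (1 - (m:ℝ)) = (k:ℝ) * α + (α - m + 1) := by push_cast; ring
  have e2 : t ^ ((k:ℝ) * α + (α - (m:ℝ) + 1) - 1) = t ^ (α - (m:ℝ)) * (t ^ α) ^ k := by
    rw [show (k:ℝ) * α + (α - (m:ℝ) + 1) - 1 = (α - (m:ℝ)) + α * (k:ℝ) by ring,
      Real.rpow_add ht, Real.rpow_mul ht.le, Real.rpow_natCast]
  rw [e1, e2, pow_succ, mul_pow]
  ring

/-- For `λ > 0`, `α > 0` and a positive integer `m`, the function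
`t ↦ E_{α,1}(−λ t^α)` is `m` times differentiable on `(0,∞)` and
`d^m/dt^m E_{α,1}(−λ t^α) = −λ t^{α−m} E_{α,α−m+1}(−λ t^α)` for `t > 0`. -/
theorem mittagLeffler_iteratedDeriv (lam α : ℝ) (hlam : 0 < lam) (hα : 0 < α)
    (m : ℕ) (hm : 0 < m) :
    ContDiffOn ℝ (m : ℕ∞) (fun t : ℝ => mlReal α 1 (-lam * t ^ α)) (Set.Ioi 0) ∧
    ∀ t : ℝ, 0 < t →
      iteratedDerivWithin m (fun t : ℝ => mlReal α 1 (-lam * t ^ α)) (Set.Ioi 0) t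
        = -lam * t ^ (α - m) * mlReal α (α - m + 1) (-lam * t ^ α) := by
  have hfG : Set.EqOn (fun t : ℝ => mlReal α 1 (-lam * t ^ α)) (Gfun lam α 1) (Set.Ioi 0) := by
    intro t ht
    simp only
    rw [G_eq lam α 1 ht, sub_self, Real.rpow_zero, mul_one]
  have hiter : ∀ j : ℕ,
      Set.EqOn (iteratedDerivWithin j (fun t : ℝ => mlReal α 1 (-lam * t ^ α)) (Set.Ioi 0))
        (Gfun lam α (1 - j)) (Set.Ioi 0) := by
    intro j
    induction j with
    | zero =>
      simp only [iteratedDerivWithin_zero, Nat.cast_zero, sub_zero]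
      exact hfG
    | succ j ih =>
      intro t ht
      have huniq : UniqueDiffWithinAt ℝ (Set.Ioi (0:ℝ)) t := isOpen_Ioi.uniqueDiffWithinAt ht
      rw [iteratedDerivWithin_succ, derivWithin_congr ih (ih ht),
        ((Gderiv lam α hlam hα (1 - j) ht).hasDerivWithinAt).derivWithin huniq]
      congr 1
      push_cast
      ring
  constructor
  · apply contDiffOn_of_differentiableOn_deriv
    intro j _
    apply DifferentiableOn.congr (f := Gfun lam α (1 - j))
    · intro t ht
      exact ((Gderiv lam α hlam hα (1 - j) ht).differentiableAt).differentiableWithinAt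
    · exact hiter j
  · intro t ht
    rw [hiter m ht, G_shift lam α hlam hα m hm ht]
end

section
/- Let λ > 0 and α > 0. Then the function t ↦ t · E_{α,2}(−λ t^α) is differentiable on [0, ∞) (with a one-sided derivative at t = 0) and d/dt ( t E_{α,2}(−λ t^α) ) = E_{α,1}(−λ t^α) for every t ≥ 0. -/
open Real Filter

/-- Log-convexity of Γ gives `Γ(y) (y-1)^α ≤ Γ(y+α)` for `y ≥ 2`. -/
lemma gamma_ratio_lb (α : ℝ) (hα : 0 < α) {y : ℝ} (hy : 2 ≤ y) :
    Real.Gamma y * (y - 1) ^ α ≤ Real.Gamma (y + α) := by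
  have hy1 : (0:ℝ) < y - 1 := by linarith
  have hy0 : (0:ℝ) < y := by linarith
  have hyα : (0:ℝ) < y + α := by linarith
  have hG1 : 0 < Real.Gamma (y - 1) := Real.Gamma_pos_of_pos hy1
  have hGy : 0 < Real.Gamma y := Real.Gamma_pos_of_pos hy0
  have hGyα : 0 < Real.Gamma (y + α) := Real.Gamma_pos_of_pos hyα
  have hconv := Real.convexOn_log_Gamma
  have hslope := hconv.slope_mono_adjacent (x := y - 1) (y := y) (z := y + α)
    (Set.mem_Ioi.2 hy1) (Set.mem_Ioi.2 hyα) (by linarith) (by linarith)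
  have hGid : Real.Gamma y = (y - 1) * Real.Gamma (y - 1) := by
    have := Real.Gamma_add_one (s := y - 1) (ne_of_gt hy1)
    simpa using this
  have hlogdiff : Real.log (Real.Gamma y) - Real.log (Real.Gamma (y - 1)) = Real.log (y - 1) := by
    rw [hGid, Real.log_mul (ne_of_gt hy1) (ne_of_gt hG1)]; ring
  simp only [Function.comp] at hslope
  have h1 : y - (y - 1) = 1 := by ring
  have h2 : y + α - y = α := by ring
  rw [h1, h2, div_one, hlogdiff, le_div_iff₀ hα] at hslope
  have key : Real.log (Real.Gamma y) + α * Real.log (y - 1) ≤ Real.log (Real.Gamma (y + α)) := by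
    nlinarith [hslope]
  calc Real.Gamma y * (y - 1) ^ α
      = Real.exp (Real.log (Real.Gamma y) + α * Real.log (y - 1)) := by
        rw [Real.exp_add, Real.exp_log hGy, Real.rpow_def_of_pos hy1, mul_comm (Real.log (y-1)) α]
    _ ≤ Real.exp (Real.log (Real.Gamma (y + α))) := Real.exp_le_exp.2 key
    _ = Real.Gamma (y + α) := Real.exp_log hGyα

lemma ml_summable (α b x : ℝ) (hα : 0 < α) (hb : 0 < b) :
    Summable (fun k : ℕ => x ^ k / Real.Gamma ((k : ℝ) * α + b)) := by
  set M : ℝ := max 1 (2 * |x|) with hM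
  have hM1 : (1:ℝ) ≤ M := le_max_left _ _
  have hM0 : (0:ℝ) < M := by linarith
  have htend : Tendsto (fun k : ℕ => (k : ℝ) * α + b) atTop atTop := by
    apply Filter.tendsto_atTop_add_const_right
    exact Tendsto.atTop_mul_const hα tendsto_natCast_atTop_atTop
  have hev : ∀ᶠ k : ℕ in atTop, M ^ (1/α) + 2 ≤ (k : ℝ) * α + b :=
    htend.eventually_ge_atTop _
  refine summable_of_ratio_norm_eventually_le (r := 1/2) (by norm_num) ?_
  filter_upwards [hev] with k hk
  set y : ℝ := (k : ℝ) * α + b with hy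
  have hMrpow : (0:ℝ) ≤ M ^ (1/α) := Real.rpow_nonneg (le_of_lt hM0) _
  have hy2 : 2 ≤ y := by linarith
  have hy1 : (1:ℝ) ≤ y - 1 := by linarith
  have hGy : 0 < Real.Gamma y := Real.Gamma_pos_of_pos (by linarith)
  have hGyα : 0 < Real.Gamma (y + α) := Real.Gamma_pos_of_pos (by linarith)
  have hMle : M ≤ (y - 1) ^ α := by
    have h1 : M ^ (1/α) ≤ y - 1 := by linarith
    have := Real.rpow_le_rpow hMrpow h1 (le_of_lt hα)
    rwa [← Real.rpow_mul (le_of_lt hM0), one_div,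
      inv_mul_cancel₀ (ne_of_gt hα), Real.rpow_one] at this
  have hkey : Real.Gamma y * (y - 1) ^ α ≤ Real.Gamma (y + α) := gamma_ratio_lb α hα hy2
  have hgamma : 2 * |x| * Real.Gamma y ≤ Real.Gamma (y + α) := by
    have : 2 * |x| ≤ (y - 1) ^ α := le_trans (le_max_right _ _) hMle
    nlinarith
  have hk1 : ((k+1 : ℕ) : ℝ) * α + b = y + α := by push_cast; ring
  rw [norm_div, norm_div, Real.norm_eq_abs, Real.norm_eq_abs, Real.norm_eq_abs,
    Real.norm_eq_abs, hk1, abs_of_pos hGy, abs_of_pos hGyα, abs_pow, abs_pow,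
    show (1/2 : ℝ) * (|x|^k / Real.Gamma y) = (1/2 * |x|^k) / Real.Gamma y from by ring,
    div_le_div_iff₀ hGyα hGy]
  have h2 := mul_le_mul_of_nonneg_left hgamma (pow_nonneg (abs_nonneg x) k)
  rw [pow_succ]
  nlinarith [h2]

/-- For `λ > 0` and `α > 0`, the function `t ↦ t E_{α,2}(−λ t^α)` is differentiable on
`[0,∞)` (one-sidedly at `t = 0`) with derivative `E_{α,1}(−λ t^α)` for every `t ≥ 0`. -/
theorem mittagLeffler_deriv_t_E2 (lam α : ℝ) (hlam : 0 < lam) (hα : 0 < α) :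
    ∀ t : ℝ, 0 ≤ t →
      HasDerivWithinAt (fun t : ℝ => t * mlReal α 2 (-lam * t ^ α))
        (mlReal α 1 (-lam * t ^ α)) (Set.Ici 0) t := by
  intro t ht
  set R : ℝ := t + 1 with hR
  have hR0 : 0 < R := by linarith
  set c : ℕ → ℝ := fun k => (-lam) ^ k / Real.Gamma ((k : ℝ) * α + 2) with hc
  set g : ℕ → ℝ → ℝ := fun k y => c k * y ^ ((k : ℝ) * α + 1) with hgdef
  set g' : ℕ → ℝ → ℝ := fun k y => c k * (((k : ℝ) * α + 1) * y ^ ((k : ℝ) * α)) with hg'def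
  set u : ℕ → ℝ := fun k => (lam * R ^ α) ^ k / Real.Gamma ((k : ℝ) * α + 1) with hudef
  have hknn : ∀ k : ℕ, (0:ℝ) ≤ (k : ℝ) * α := fun k =>
    mul_nonneg (Nat.cast_nonneg k) hα.le
  have hp1 : ∀ k : ℕ, (0:ℝ) < (k : ℝ) * α + 1 := fun k => by have := hknn k; linarith
  have hG1 : ∀ k : ℕ, 0 < Real.Gamma ((k : ℝ) * α + 1) := fun k =>
    Real.Gamma_pos_of_pos (hp1 k)
  have hG2 : ∀ k : ℕ, 0 < Real.Gamma ((k : ℝ) * α + 2) := fun k =>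
    Real.Gamma_pos_of_pos (by have := hknn k; linarith)
  have hGrec : ∀ k : ℕ, Real.Gamma ((k : ℝ) * α + 2)
      = ((k : ℝ) * α + 1) * Real.Gamma ((k : ℝ) * α + 1) := by
    intro k
    have := Real.Gamma_add_one (s := (k : ℝ) * α + 1) (hp1 k).ne'
    rw [show (k : ℝ) * α + 1 + 1 = (k : ℝ) * α + 2 by ring] at this
    exact this
  have hpow_eq : ∀ y : ℝ, 0 ≤ y → ∀ k : ℕ, (y ^ α) ^ k = y ^ ((k : ℝ) * α) := by
    intro y hy k
    rw [← Real.rpow_natCast (y ^ α) k, ← Real.rpow_mul hy, mul_comm]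
  have husum : Summable u := ml_summable α 1 (lam * R ^ α) hα one_pos
  have hderiv : ∀ (k : ℕ) (y : ℝ), y ∈ Set.Ioo (-R) R → HasDerivAt (g k) (g' k y) y := by
    intro k y _
    have h := Real.hasDerivAt_rpow_const (x := y) (p := (k : ℝ) * α + 1)
      (Or.inr (by have := hknn k; linarith))
    have h2 := h.const_mul (c k)
    simpa [show (k : ℝ) * α + 1 - 1 = (k : ℝ) * α by ring, mul_assoc] using h2
  have hbound : ∀ (k : ℕ) (y : ℝ), y ∈ Set.Ioo (-R) R → ‖g' k y‖ ≤ u k := by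
    intro k y hy
    have hyR : |y| ≤ R := by
      rw [abs_le]; exact ⟨hy.1.le, hy.2.le⟩
    have hyb : |y ^ ((k : ℝ) * α)| ≤ R ^ ((k : ℝ) * α) :=
      (Real.abs_rpow_le_abs_rpow _ _).trans
        (Real.rpow_le_rpow (abs_nonneg y) hyR (hknn k))
    have hcabs : |c k| = lam ^ k / Real.Gamma ((k : ℝ) * α + 2) := by
      rw [hc, abs_div, abs_pow, abs_neg, abs_of_pos hlam, abs_of_pos (hG2 k)]
    have hueq : u k = (lam ^ k * R ^ ((k : ℝ) * α)) * (((k : ℝ) * α + 1)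
        / Real.Gamma ((k : ℝ) * α + 2)) := by
      rw [hudef]
      simp only [hGrec k, mul_pow]
      rw [hpow_eq R hR0.le k]
      field_simp
    calc ‖g' k y‖ = |c k| * (((k : ℝ) * α + 1) * |y ^ ((k : ℝ) * α)|) := by
          rw [hg'def, Real.norm_eq_abs, abs_mul, abs_mul, abs_of_pos (hp1 k)]
      _ ≤ (lam ^ k / Real.Gamma ((k : ℝ) * α + 2)) * (((k : ℝ) * α + 1) * R ^ ((k : ℝ) * α)) := by
          rw [hcabs]
          apply mul_le_mul_of_nonneg_left _ (by positivity)
          exact mul_le_mul_of_nonneg_left hyb (hp1 k).le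
      _ = (lam ^ k * R ^ ((k : ℝ) * α)) * (((k : ℝ) * α + 1)
            / Real.Gamma ((k : ℝ) * α + 2)) := by ring
      _ = u k := (hueq).symm
  have hg0 : Summable fun k => g k 0 := by
    have : (fun k => g k 0) = fun _ => (0:ℝ) := by
      funext k
      rw [hgdef]
      simp [Real.zero_rpow (hp1 k).ne']
    rw [this]; exact summable_zero
  have hmem : t ∈ Set.Ioo (-R) R := ⟨by linarith, by linarith⟩
  have h0mem : (0:ℝ) ∈ Set.Ioo (-R) R := ⟨by linarith, by linarith⟩
  have main : HasDerivAt (fun z => ∑' k, g k z) (∑' k, g' k t) t :=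
    hasDerivAt_tsum_of_isPreconnected husum isOpen_Ioo isPreconnected_Ioo
      hderiv hbound h0mem hg0 hmem
  have hder_eq : (∑' k, g' k t) = mlReal α 1 (-lam * t ^ α) := by
    unfold mlReal
    apply tsum_congr
    intro k
    rw [hg'def, hc]
    dsimp only
    have hpow : (-lam * t ^ α) ^ k = (-lam) ^ k * t ^ ((k : ℝ) * α) := by
      rw [mul_pow, hpow_eq t ht k]
    rw [hpow, hGrec k]
    have h1 := (hG1 k).ne'
    have h2 := (hp1 k).ne'
    field_simp
  have hfun : ∀ y ∈ Set.Ici (0:ℝ), y * mlReal α 2 (-lam * y ^ α) = ∑' k, g k y := by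
    intro y hy
    unfold mlReal
    rw [← tsum_mul_left]
    apply tsum_congr
    intro k
    rw [hgdef, hc]
    dsimp only
    rcases eq_or_lt_of_le (Set.mem_Ici.1 hy) with h0 | h0
    · rw [← h0]
      simp [Real.zero_rpow (hp1 k).ne']
    · have hpow : (-lam * y ^ α) ^ k = (-lam) ^ k * y ^ ((k : ℝ) * α) := by
        rw [mul_pow, hpow_eq y h0.le k]
      rw [hpow, Real.rpow_add_one h0.ne' ((k : ℝ) * α)]
      field_simp
  rw [← hder_eq]
  exact main.hasDerivWithinAt.congr hfun (hfun t ht)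
end

section
/- Let 1/2 < H < 1 and let t₁ ≤ t₂ be real numbers. Then for every measurable function f : ℝ → ℝ with ∫_{t₁}^{t₂} f(s)² ds < ∞, one has H(2H−1) ∫_{t₁}^{t₂} ∫_{t₁}^{t₂} |f(s)| |f(r)| |s−r|^{2H−2} dr ds ≤ 2H (t₂−t₁)^{2H−1} ∫_{t₁}^{t₂} f(s)² ds. -/
open MeasureTheory
open scoped ENNReal

lemma lint_sub_left (α : ℝ) (hα : -1 < α) (hα1 : 0 < α + 1) (a b : ℝ) (hab : a ≤ b) :
    ∫⁻ r in Set.Ioc a b, ENNReal.ofReal ((b - r) ^ α)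
      = ENNReal.ofReal ((b - a) ^ (α + 1) / (α + 1)) := by
  have hii : IntervalIntegrable (fun r => (b - r) ^ α) volume a b := by
    simpa using (intervalIntegral.intervalIntegrable_rpow'
      (a := b - a) (b := (0:ℝ)) hα).comp_sub_left b
  have hnn : 0 ≤ᵐ[volume.restrict (Set.Ioc a b)] fun r => (b - r) ^ α :=
    (ae_restrict_mem measurableSet_Ioc).mono fun r hr =>
      Real.rpow_nonneg (by linarith [hr.2]) α
  rw [← ofReal_integral_eq_lintegral_ofReal
    ((intervalIntegrable_iff_integrableOn_Ioc_of_le hab).mp hii) hnn]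
  congr 1
  rw [← intervalIntegral.integral_of_le hab,
    intervalIntegral.integral_comp_sub_left (fun x => x ^ α) b, sub_self,
    integral_rpow (Or.inl hα), Real.zero_rpow (ne_of_gt hα1)]
  ring

lemma lint_sub_right (α : ℝ) (hα : -1 < α) (hα1 : 0 < α + 1) (a b : ℝ) (hab : a ≤ b) :
    ∫⁻ r in Set.Ioc a b, ENNReal.ofReal ((r - a) ^ α)
      = ENNReal.ofReal ((b - a) ^ (α + 1) / (α + 1)) := by
  have hii : IntervalIntegrable (fun r => (r - a) ^ α) volume a b := by
    simpa using (intervalIntegral.intervalIntegrable_rpow'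
      (a := (0:ℝ)) (b := b - a) hα).comp_sub_right a
  have hnn : 0 ≤ᵐ[volume.restrict (Set.Ioc a b)] fun r => (r - a) ^ α :=
    (ae_restrict_mem measurableSet_Ioc).mono fun r hr =>
      Real.rpow_nonneg (by linarith [hr.1]) α
  rw [← ofReal_integral_eq_lintegral_ofReal
    ((intervalIntegrable_iff_integrableOn_Ioc_of_le hab).mp hii) hnn]
  congr 1
  rw [← intervalIntegral.integral_of_le hab,
    intervalIntegral.integral_comp_sub_right (fun x => x ^ α) a, sub_self,
    integral_rpow (Or.inl hα), Real.zero_rpow (ne_of_gt hα1)]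
  ring

lemma kernel_bound (α : ℝ) (hα : -1 < α) (hα1 : 0 < α + 1) (t₁ t₂ s : ℝ)
    (hs1 : t₁ ≤ s) (hs2 : s ≤ t₂) :
    ∫⁻ r in Set.Ioc t₁ t₂, ENNReal.ofReal (|s - r| ^ α)
      ≤ ENNReal.ofReal (2 * (t₂ - t₁) ^ (α + 1) / (α + 1)) := by
  have hsplit : Set.Ioc t₁ s ∪ Set.Ioc s t₂ = Set.Ioc t₁ t₂ :=
    Set.Ioc_union_Ioc_eq_Ioc hs1 hs2
  have hdisj : Disjoint (Set.Ioc t₁ s) (Set.Ioc s t₂) := by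
    simp [Set.Ioc_disjoint_Ioc, le_refl, min_le_iff]
  rw [← hsplit, lintegral_union measurableSet_Ioc hdisj]
  have h1 : ∫⁻ r in Set.Ioc t₁ s, ENNReal.ofReal (|s - r| ^ α)
      ≤ ENNReal.ofReal ((t₂ - t₁) ^ (α + 1) / (α + 1)) := by
    have he : ∫⁻ r in Set.Ioc t₁ s, ENNReal.ofReal (|s - r| ^ α)
        = ∫⁻ r in Set.Ioc t₁ s, ENNReal.ofReal ((s - r) ^ α) := by
      refine setLIntegral_congr_fun measurableSet_Ioc
        (fun r hr => ?_)
      rw [abs_of_nonneg (by linarith [hr.2])]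
    rw [he]
    calc ∫⁻ r in Set.Ioc t₁ s, ENNReal.ofReal ((s - r) ^ α)
        ≤ ∫⁻ r in Set.Ioc (s - (t₂ - t₁)) s, ENNReal.ofReal ((s - r) ^ α) :=
          lintegral_mono_set (Set.Ioc_subset_Ioc_left (by linarith))
      _ = ENNReal.ofReal ((s - (s - (t₂ - t₁))) ^ (α + 1) / (α + 1)) :=
          lint_sub_left α hα hα1 _ _ (by linarith)
      _ = ENNReal.ofReal ((t₂ - t₁) ^ (α + 1) / (α + 1)) := by ring_nf
  have h2 : ∫⁻ r in Set.Ioc s t₂, ENNReal.ofReal (|s - r| ^ α)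
      ≤ ENNReal.ofReal ((t₂ - t₁) ^ (α + 1) / (α + 1)) := by
    have he : ∫⁻ r in Set.Ioc s t₂, ENNReal.ofReal (|s - r| ^ α)
        = ∫⁻ r in Set.Ioc s t₂, ENNReal.ofReal ((r - s) ^ α) := by
      refine setLIntegral_congr_fun measurableSet_Ioc
        (fun r hr => ?_)
      rw [abs_sub_comm, abs_of_nonneg (by linarith [hr.1])]
    rw [he]
    calc ∫⁻ r in Set.Ioc s t₂, ENNReal.ofReal ((r - s) ^ α)
        ≤ ∫⁻ r in Set.Ioc s (s + (t₂ - t₁)), ENNReal.ofReal ((r - s) ^ α) :=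
          lintegral_mono_set (Set.Ioc_subset_Ioc_right (by linarith))
      _ = ENNReal.ofReal ((s + (t₂ - t₁) - s) ^ (α + 1) / (α + 1)) :=
          lint_sub_right α hα hα1 _ _ (by linarith)
      _ = ENNReal.ofReal ((t₂ - t₁) ^ (α + 1) / (α + 1)) := by ring_nf
  calc _ ≤ ENNReal.ofReal ((t₂ - t₁) ^ (α + 1) / (α + 1))
        + ENNReal.ofReal ((t₂ - t₁) ^ (α + 1) / (α + 1)) := add_le_add h1 h2
    _ = ENNReal.ofReal (2 * (t₂ - t₁) ^ (α + 1) / (α + 1)) := by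
        have hc : 0 ≤ (t₂ - t₁) ^ (α + 1) / (α + 1) :=
          div_nonneg (Real.rpow_nonneg (by linarith) _) hα1.le
        rw [← ENNReal.ofReal_add hc hc]; ring_nf

/-- The deterministic kernel inequality behind the fractional-Brownian-motion isometry
(Lemma 2.10 of the paper, with expectations stripped): for `1/2 < H < 1`, `t₁ ≤ t₂`, and
a measurable `f` with `∫_{t₁}^{t₂} f(s)² ds < ∞`,
`H(2H−1) ∫∫ |f(s)||f(r)||s−r|^{2H−2} dr ds ≤ 2H (t₂−t₁)^{2H−1} ∫ f(s)² ds`,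
all integrals being Lebesgue integrals of nonnegative functions. -/
theorem fbm_kernel_inequality (H : ℝ) (hH1 : 1 / 2 < H) (hH2 : H < 1)
    (t₁ t₂ : ℝ) (ht : t₁ ≤ t₂) (f : ℝ → ℝ) (hf : Measurable f)
    (hint : ∫⁻ s in Set.Ioc t₁ t₂, ENNReal.ofReal (f s ^ 2) < ⊤) :
    ENNReal.ofReal (H * (2 * H - 1)) *
        ∫⁻ s in Set.Ioc t₁ t₂, ∫⁻ r in Set.Ioc t₁ t₂,
          ENNReal.ofReal (|f s| * |f r| * |s - r| ^ (2 * H - 2))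
      ≤ ENNReal.ofReal (2 * H * (t₂ - t₁) ^ (2 * H - 1)) *
        ∫⁻ s in Set.Ioc t₁ t₂, ENNReal.ofReal (f s ^ 2) := by
  have hα : -1 < 2 * H - 2 := by linarith
  have hα1 : 0 < 2 * H - 2 + 1 := by linarith
  set μ := volume.restrict (Set.Ioc t₁ t₂) with hμ
  set C : ℝ := 2 * (t₂ - t₁) ^ (2 * H - 2 + 1) / (2 * H - 2 + 1) with hC
  have hCnn : 0 ≤ C := by
    apply div_nonneg _ hα1.le
    have := Real.rpow_nonneg (sub_nonneg.mpr ht) (2 * H - 2 + 1)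
    linarith
  set g1 : ℝ → ℝ → ℝ≥0∞ :=
    fun s r => ENNReal.ofReal (f s ^ 2 / 2 * |s - r| ^ (2 * H - 2)) with hg1
  set g2 : ℝ → ℝ → ℝ≥0∞ :=
    fun s r => ENNReal.ofReal (f r ^ 2 / 2 * |s - r| ^ (2 * H - 2)) with hg2
  have hg1m : Measurable fun p : ℝ × ℝ => g1 p.1 p.2 := by
    simp only [hg1]; fun_prop
  have hg2m : Measurable fun p : ℝ × ℝ => g2 p.1 p.2 := by
    simp only [hg2]; fun_prop
  -- pointwise bound
  have key : ∀ s r : ℝ,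
      ENNReal.ofReal (|f s| * |f r| * |s - r| ^ (2 * H - 2)) ≤ g1 s r + g2 s r := by
    intro s r
    have hknn : (0:ℝ) ≤ |s - r| ^ (2 * H - 2) := Real.rpow_nonneg (abs_nonneg _) _
    calc ENNReal.ofReal (|f s| * |f r| * |s - r| ^ (2 * H - 2))
        ≤ ENNReal.ofReal (f s ^ 2 / 2 * |s - r| ^ (2 * H - 2)
            + f r ^ 2 / 2 * |s - r| ^ (2 * H - 2)) := by
          apply ENNReal.ofReal_le_ofReal
          nlinarith [sq_nonneg (|f s| - |f r|), sq_abs (f s), sq_abs (f r),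
            mul_nonneg (mul_nonneg (abs_nonneg (f s)) (abs_nonneg (f r))) hknn,
            sq_nonneg (|f s| - |f r|)]
      _ ≤ g1 s r + g2 s r := ENNReal.ofReal_add_le
  -- bound for A := double integral of g1
  have hkb : ∀ s ∈ Set.Ioc t₁ t₂,
      (∫⁻ r, ENNReal.ofReal (|s - r| ^ (2 * H - 2)) ∂μ) ≤ ENNReal.ofReal C :=
    fun s hs => kernel_bound (2 * H - 2) hα hα1 t₁ t₂ s hs.1.le hs.2
  have hA : (∫⁻ s, ∫⁻ r, g1 s r ∂μ ∂μ)
      ≤ (∫⁻ s, ENNReal.ofReal (f s ^ 2) ∂μ) * ENNReal.ofReal (C / 2) := by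
    have step1 : ∀ s : ℝ, (∫⁻ r, g1 s r ∂μ)
        = ENNReal.ofReal (f s ^ 2 / 2) * ∫⁻ r, ENNReal.ofReal (|s - r| ^ (2 * H - 2)) ∂μ := by
      intro s
      rw [← lintegral_const_mul' _ _ ENNReal.ofReal_ne_top]
      refine lintegral_congr fun r => ?_
      rw [hg1, ← ENNReal.ofReal_mul (by positivity)]
    calc (∫⁻ s, ∫⁻ r, g1 s r ∂μ ∂μ)
        ≤ ∫⁻ s, ENNReal.ofReal (f s ^ 2 / 2) * ENNReal.ofReal C ∂μ := by
          refine lintegral_mono_ae (((ae_restrict_mem measurableSet_Ioc)).mono fun s hs => ?_)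
          rw [step1 s]
          exact mul_le_mul_right (hkb s hs) _
      _ = ∫⁻ s, ENNReal.ofReal (f s ^ 2) * ENNReal.ofReal (C / 2) ∂μ := by
          refine lintegral_congr fun s => ?_
          rw [← ENNReal.ofReal_mul (by positivity), ← ENNReal.ofReal_mul (by positivity)]
          ring_nf
      _ = (∫⁻ s, ENNReal.ofReal (f s ^ 2) ∂μ) * ENNReal.ofReal (C / 2) :=
          lintegral_mul_const _ (by fun_prop)
  -- B = A by symmetry
  have hBA : (∫⁻ s, ∫⁻ r, g2 s r ∂μ ∂μ) = ∫⁻ s, ∫⁻ r, g1 s r ∂μ ∂μ := by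
    rw [lintegral_lintegral_swap hg2m.aemeasurable]
    refine lintegral_congr fun r => lintegral_congr fun s => ?_
    simp only [hg1, hg2, abs_sub_comm s r]
  -- combine
  have hI : (∫⁻ s, ∫⁻ r,
      ENNReal.ofReal (|f s| * |f r| * |s - r| ^ (2 * H - 2)) ∂μ ∂μ)
      ≤ (∫⁻ s, ENNReal.ofReal (f s ^ 2) ∂μ) * ENNReal.ofReal C := by
    calc (∫⁻ s, ∫⁻ r, ENNReal.ofReal (|f s| * |f r| * |s - r| ^ (2 * H - 2)) ∂μ ∂μ)
        ≤ ∫⁻ s, ∫⁻ r, (g1 s r + g2 s r) ∂μ ∂μ :=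
          lintegral_mono fun s => lintegral_mono fun r => key s r
      _ = (∫⁻ s, ∫⁻ r, g1 s r ∂μ ∂μ) + ∫⁻ s, ∫⁻ r, g2 s r ∂μ ∂μ := by
          rw [← lintegral_add_left (hg1m.lintegral_prod_right')]
          refine lintegral_congr fun s => ?_
          exact lintegral_add_left (by fun_prop) _
      _ ≤ (∫⁻ s, ENNReal.ofReal (f s ^ 2) ∂μ) * ENNReal.ofReal (C / 2)
          + (∫⁻ s, ENNReal.ofReal (f s ^ 2) ∂μ) * ENNReal.ofReal (C / 2) := by
          rw [hBA]; exact add_le_add hA hA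
      _ = (∫⁻ s, ENNReal.ofReal (f s ^ 2) ∂μ) * ENNReal.ofReal C := by
          rw [← mul_add, ← ENNReal.ofReal_add (by linarith) (by linarith)]
          ring_nf
  calc ENNReal.ofReal (H * (2 * H - 1)) *
        ∫⁻ s, ∫⁻ r, ENNReal.ofReal (|f s| * |f r| * |s - r| ^ (2 * H - 2)) ∂μ ∂μ
      ≤ ENNReal.ofReal (H * (2 * H - 1)) *
        ((∫⁻ s, ENNReal.ofReal (f s ^ 2) ∂μ) * ENNReal.ofReal C) :=
        mul_le_mul_right hI _
    _ = ENNReal.ofReal (H * (2 * H - 1) * C) * ∫⁻ s, ENNReal.ofReal (f s ^ 2) ∂μ := by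
        rw [mul_comm (∫⁻ s, ENNReal.ofReal (f s ^ 2) ∂μ) (ENNReal.ofReal C), ← mul_assoc,
          ← ENNReal.ofReal_mul (by nlinarith)]
    _ = ENNReal.ofReal (2 * H * (t₂ - t₁) ^ (2 * H - 1)) *
        ∫⁻ s, ENNReal.ofReal (f s ^ 2) ∂μ := by
        congr 2
        rw [hC]
        have h21 : 2 * H - 2 + 1 = 2 * H - 1 := by ring
        rw [h21]
        have hne : 2 * H - 1 ≠ 0 := by intro h; nlinarith
        have hx : (2 * H - 1) * (2 * (t₂ - t₁) ^ (2 * H - 1) / (2 * H - 1))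
            = 2 * (t₂ - t₁) ^ (2 * H - 1) := by
          rw [mul_div_assoc']; exact mul_div_cancel_left₀ _ hne
        linear_combination H * hx
end

section
/- Let T ∈ (0, ∞], b ≥ 0, γ > 0, and let a, u : [0, T) → [0, ∞) be measurable and locally integrable on [0, T). Suppose that u(t) ≤ a(t) + b ∫_0^t (t − s)^{γ−1} u(s) ds for all 0 ≤ t < T. Then u(t) ≤ a(t) + ∫_0^t [ ∑_{n=1}^∞ (b Γ(γ))^n / Γ(nγ) · (t − s)^{nγ−1} ] a(s) ds for all 0 ≤ t < T. -/
open MeasureTheory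
open scoped ENNReal

section HenryAux

open Set Filter Topology

private lemma henry_beta_integrable {α β s t : ℝ} (hα : 0 < α) (hβ : 0 < β) (hst : s < t) :
    IntervalIntegrable (fun r : ℝ => (r - s) ^ (β - 1) * (t - r) ^ (α - 1)) volume s t := by
  have hm : s < (s + t) / 2 := by linarith
  have hm' : (s + t) / 2 < t := by linarith
  have h1 : IntervalIntegrable (fun r : ℝ => (r - s) ^ (β - 1) * (t - r) ^ (α - 1))
      volume s ((s + t) / 2) := by
    refine IntervalIntegrable.mul_continuousOn ?_ ?_
    · have := (intervalIntegral.intervalIntegrable_rpow' (a := 0) (b := (s+t)/2 - s)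
        (r := β - 1) (by linarith)).comp_sub_right s
      simpa using this
    · refine (continuousOn_const.sub continuousOn_id).rpow_const (fun y hy => ?_)
      rw [uIcc_of_le hm.le] at hy
      left
      simp only [Pi.sub_apply, id_eq]
      intro h
      nlinarith [hy.2]
  have h2 : IntervalIntegrable (fun r : ℝ => (r - s) ^ (β - 1) * (t - r) ^ (α - 1))
      volume ((s + t) / 2) t := by
    refine IntervalIntegrable.continuousOn_mul ?_ ?_
    · have := (intervalIntegral.intervalIntegrable_rpow' (a := t - (s+t)/2) (b := 0)
        (r := α - 1) (by linarith)).comp_sub_left t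
      simpa using this
    · refine (continuousOn_id.sub continuousOn_const).rpow_const (fun y hy => ?_)
      rw [uIcc_of_le hm'.le] at hy
      left
      simp only [Pi.sub_apply, id_eq]
      intro h
      nlinarith [hy.1]
  exact h1.trans h2

private lemma henry_beta_value {α β s t : ℝ} (hα : 0 < α) (hβ : 0 < β) (hst : s < t) :
    ∫ r in s..t, (r - s) ^ (β - 1) * (t - r) ^ (α - 1) =
      Real.Gamma α * Real.Gamma β / Real.Gamma (α + β) * (t - s) ^ (α + β - 1) := by
  have hts : (0:ℝ) < t - s := by linarith
  have hscaled := Complex.betaIntegral_scaled (β : ℂ) (α : ℂ) hts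
  have hcomp : (∫ r in s..t, ((r - s : ℝ) : ℂ) ^ ((β : ℂ) - 1) * (((t - s : ℝ) : ℂ) - ((r - s : ℝ):ℂ)) ^ ((α : ℂ) - 1))
      = ∫ x in (0:ℝ)..(t - s), (x : ℂ) ^ ((β:ℂ) - 1) * (((t - s :ℝ) : ℂ) - x) ^ ((α:ℂ) - 1) := by
    have := intervalIntegral.integral_comp_sub_right
      (fun x : ℝ => (x : ℂ) ^ ((β:ℂ) - 1) * (((t - s:ℝ) : ℂ) - (x:ℂ)) ^ ((α:ℂ) - 1)) s (a := s) (b := t)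
    simpa using this
  have hcongr : (∫ r in s..t, ((r - s : ℝ) : ℂ) ^ ((β : ℂ) - 1) * (((t - s : ℝ) : ℂ) - ((r - s : ℝ):ℂ)) ^ ((α : ℂ) - 1))
      = ((∫ r in s..t, (r - s) ^ (β - 1) * (t - r) ^ (α - 1) : ℝ) : ℂ) := by
    rw [← intervalIntegral.integral_ofReal]
    refine intervalIntegral.integral_congr (fun r hr => ?_)
    rw [uIcc_of_le hst.le] at hr
    push_cast
    rw [Complex.ofReal_cpow (by linarith [hr.1] : (0:ℝ) ≤ r - s) (β - 1),
        Complex.ofReal_cpow (by linarith [hr.2] : (0:ℝ) ≤ t - r) (α - 1)]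
    push_cast
    ring_nf
  have hGpos : (0:ℝ) < Real.Gamma (α + β) := Real.Gamma_pos_of_pos (by linarith)
  have hGne : (Real.Gamma (α + β) : ℂ) ≠ 0 := by exact_mod_cast hGpos.ne'
  have hBeta : Complex.betaIntegral (β : ℂ) (α : ℂ)
      = ((Real.Gamma α * Real.Gamma β / Real.Gamma (α + β) : ℝ) : ℂ) := by
    have h := Complex.Gamma_mul_Gamma_eq_betaIntegral (s := (β:ℂ)) (t := (α:ℂ))
      (by simpa using hβ) (by simpa using hα)
    rw [← Complex.ofReal_add, Complex.Gamma_ofReal, Complex.Gamma_ofReal] at h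
    have hab : ((β:ℝ) + α : ℝ) = α + β := by ring
    rw [hab] at h
    rw [Complex.Gamma_ofReal] at h
    field_simp at h ⊢
    rw [Complex.ofReal_div, Complex.ofReal_mul, eq_div_iff hGne]
    linear_combination -h
  have : ((∫ r in s..t, (r - s) ^ (β - 1) * (t - r) ^ (α - 1) : ℝ) : ℂ)
      = ((Real.Gamma α * Real.Gamma β / Real.Gamma (α + β) * (t - s) ^ (α + β - 1) : ℝ) : ℂ) := by
    rw [← hcongr, hcomp, hscaled, hBeta,
      show ((β:ℂ) + ↑α - 1) = ((α + β - 1 : ℝ) : ℂ) by push_cast; ring,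
      ← Complex.ofReal_cpow hts.le (α + β - 1)]
    push_cast
    ring_nf
  exact_mod_cast this

private lemma henry_beta_lintegral {α β s t : ℝ} (hα : 0 < α) (hβ : 0 < β) (hst : s < t) :
    ∫⁻ r in Set.Ioo s t, ENNReal.ofReal ((r - s) ^ (β - 1) * (t - r) ^ (α - 1)) =
      ENNReal.ofReal (Real.Gamma α * Real.Gamma β / Real.Gamma (α + β) * (t - s) ^ (α + β - 1)) := by
  have hint : IntegrableOn (fun r : ℝ => (r - s) ^ (β - 1) * (t - r) ^ (α - 1)) (Set.Ioo s t) := by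
    have := (intervalIntegrable_iff_integrableOn_Ioc_of_le hst.le).mp
      (henry_beta_integrable hα hβ hst)
    exact this.mono_set Set.Ioo_subset_Ioc_self
  have hnn : 0 ≤ᶠ[ae (volume.restrict (Set.Ioo s t))]
      (fun r : ℝ => (r - s) ^ (β - 1) * (t - r) ^ (α - 1)) := by
    filter_upwards [ae_restrict_mem measurableSet_Ioo] with r hr
    exact mul_nonneg (Real.rpow_nonneg (by linarith [hr.1]) _)
      (Real.rpow_nonneg (by linarith [hr.2]) _)
  rw [← ofReal_integral_eq_lintegral_ofReal hint hnn]
  congr 1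
  rw [← MeasureTheory.integral_Ioc_eq_integral_Ioo, ← intervalIntegral.integral_of_le hst.le]
  exact henry_beta_value hα hβ hst

private lemma henry_swap_triangle {F : ℝ → ℝ → ℝ≥0∞} (hF : Measurable (Function.uncurry F))
    (t : ℝ) :
    ∫⁻ s in Set.Ioo 0 t, ∫⁻ r in Set.Ioo 0 s, F s r =
      ∫⁻ r in Set.Ioo 0 t, ∫⁻ s in Set.Ioo r t, F s r := by
  set S : Set (ℝ × ℝ) := {p : ℝ × ℝ | 0 < p.2 ∧ p.2 < p.1 ∧ p.1 < t} with hS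
  have hSm : MeasurableSet S := by
    apply MeasurableSet.inter
    · exact measurableSet_lt measurable_const measurable_snd
    · exact (measurableSet_lt measurable_snd measurable_fst).inter
        (measurableSet_lt measurable_fst measurable_const)
  set H : ℝ → ℝ → ℝ≥0∞ := fun s r => S.indicator (Function.uncurry F) (s, r) with hH
  have hHm : Measurable (Function.uncurry H) := by
    have : Function.uncurry H = S.indicator (Function.uncurry F) := by
      ext p; cases p; rfl
    rw [this]
    exact hF.indicator hSm
  have hleft : ∀ s : ℝ, (∫⁻ r, H s r) =
      (Set.Ioo 0 t).indicator (fun s => ∫⁻ r in Set.Ioo 0 s, F s r) s := by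
    intro s
    by_cases hs : s ∈ Set.Ioo 0 t
    · rw [Set.indicator_of_mem hs, ← lintegral_indicator measurableSet_Ioo]
      refine lintegral_congr fun r => ?_
      by_cases hr : r ∈ Set.Ioo 0 s
      · rw [Set.indicator_of_mem hr]
        show S.indicator (Function.uncurry F) (s, r) = F s r
        exact Set.indicator_of_mem (show (s, r) ∈ S from ⟨hr.1, hr.2, hs.2⟩) _
      · rw [Set.indicator_of_notMem hr]
        show S.indicator (Function.uncurry F) (s, r) = 0
        exact Set.indicator_of_notMem (fun hmem => hr ⟨hmem.1, hmem.2.1⟩) _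
    · rw [Set.indicator_of_notMem hs]
      have : ∀ r, H s r = 0 := by
        intro r
        show S.indicator (Function.uncurry F) (s, r) = 0
        exact Set.indicator_of_notMem (fun hmem => hs ⟨lt_trans hmem.1 hmem.2.1, hmem.2.2⟩) _
      simp [this]
  have hright : ∀ r : ℝ, (∫⁻ s, H s r) =
      (Set.Ioo 0 t).indicator (fun r => ∫⁻ s in Set.Ioo r t, F s r) r := by
    intro r
    by_cases hr : r ∈ Set.Ioo 0 t
    · rw [Set.indicator_of_mem hr, ← lintegral_indicator measurableSet_Ioo]
      refine lintegral_congr fun s => ?_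
      by_cases hs : s ∈ Set.Ioo r t
      · rw [Set.indicator_of_mem hs]
        show S.indicator (Function.uncurry F) (s, r) = F s r
        exact Set.indicator_of_mem (show (s, r) ∈ S from ⟨hr.1, hs.1, hs.2⟩) _
      · rw [Set.indicator_of_notMem hs]
        show S.indicator (Function.uncurry F) (s, r) = 0
        exact Set.indicator_of_notMem (fun hmem => hs ⟨hmem.2.1, hmem.2.2⟩) _
    · rw [Set.indicator_of_notMem hr]
      have : ∀ s, H s r = 0 := by
        intro s
        show S.indicator (Function.uncurry F) (s, r) = 0
        exact Set.indicator_of_notMem (fun hmem => hr ⟨hmem.1, lt_trans hmem.2.1 hmem.2.2⟩) _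
      simp [this]
  calc ∫⁻ s in Set.Ioo 0 t, ∫⁻ r in Set.Ioo 0 s, F s r
      = ∫⁻ s, ∫⁻ r, H s r := by
        rw [← lintegral_indicator measurableSet_Ioo]
        exact lintegral_congr fun s => (hleft s).symm
    _ = ∫⁻ r, ∫⁻ s, H s r := lintegral_lintegral_swap hHm.aemeasurable
    _ = ∫⁻ r in Set.Ioo 0 t, ∫⁻ s in Set.Ioo r t, F s r := by
        rw [← lintegral_indicator measurableSet_Ioo]
        exact lintegral_congr fun r => hright r

private lemma henry_tendsto_pow_div_Gamma {x γ : ℝ} (hx : 0 ≤ x) (hγ : 0 < γ) :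
    Tendsto (fun n : ℕ => x ^ n / Real.Gamma ((n : ℝ) * γ)) atTop (nhds 0) := by
  set y : ℝ := max x 1 with hy
  have hy1 : 1 ≤ y := le_max_right _ _
  set k : ℕ := ⌈1 / γ⌉₊ with hk
  have hkγ : 1 ≤ (k : ℝ) * γ := by
    calc (1:ℝ) = (1/γ) * γ := by field_simp
    _ ≤ (k:ℝ) * γ := mul_le_mul_of_nonneg_right (Nat.le_ceil (1/γ)) hγ.le
  set z : ℝ := y ^ k with hz
  have hz1 : 1 ≤ z := one_le_pow₀ hy1
  have hmto : Tendsto (fun n : ℕ => ⌊(n : ℝ) * γ⌋₊ - 1) atTop atTop := by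
    refine Tendsto.comp (tendsto_sub_atTop_nat 1) ?_
    exact tendsto_nat_floor_atTop.comp (tendsto_natCast_atTop_atTop.atTop_mul_const hγ)
  have hgt : Tendsto (fun n : ℕ => z ^ 2 *
      (z ^ (⌊(n : ℝ) * γ⌋₊ - 1) / (Nat.factorial (⌊(n : ℝ) * γ⌋₊ - 1)))) atTop (nhds 0) := by
    have h0 := (FloorSemiring.tendsto_pow_div_factorial_atTop z).comp hmto
    simpa using h0.const_mul (z ^ 2)
  have hev : ∀ᶠ n : ℕ in atTop, (3 : ℝ) ≤ (n : ℝ) * γ := by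
    have := (tendsto_natCast_atTop_atTop (R := ℝ)).atTop_mul_const hγ
    exact this.eventually_ge_atTop 3
  refine squeeze_zero' ?_ ?_ hgt
  · filter_upwards [hev] with n hn
    have : 0 < Real.Gamma ((n:ℝ) * γ) := Real.Gamma_pos_of_pos (by linarith)
    positivity
  · filter_upwards [hev] with n hn
    set m : ℕ := ⌊(n : ℝ) * γ⌋₊ with hm
    have hnγ0 : (0:ℝ) ≤ (n:ℝ) * γ := by linarith
    have hm3 : 3 ≤ m := Nat.le_floor (by exact_mod_cast hn)
    have hmle : (m : ℝ) ≤ (n:ℝ) * γ := Nat.floor_le hnγ0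
    have hlt : (n:ℝ) * γ < (m : ℝ) + 1 := Nat.lt_floor_add_one _
    have hΓ : ((Nat.factorial (m - 1)) : ℝ) ≤ Real.Gamma ((n:ℝ) * γ) := by
      have hcast : ((m : ℕ) : ℝ) = ((m - 1 : ℕ) : ℝ) + 1 := by
        have : 1 ≤ m := by omega
        push_cast [Nat.cast_sub this]
        ring
      have hGm : Real.Gamma ((m : ℕ) : ℝ) = ((Nat.factorial (m - 1)) : ℝ) := by
        rw [hcast, Real.Gamma_nat_eq_factorial]
      rw [← hGm]
      refine Real.Gamma_strictMonoOn_Ici.monotoneOn ?_ ?_ hmle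
      · simp only [Set.mem_Ici]; exact_mod_cast by omega
      · simp only [Set.mem_Ici]; linarith
    have hxn : x ^ n ≤ z ^ (m + 1) := by
      have h1 : x ^ n ≤ y ^ n := pow_le_pow_left₀ hx (le_max_left _ _) n
      have h2 : n ≤ k * (m + 1) := by
        have hr : (n : ℝ) ≤ (k : ℝ) * ((m : ℝ) + 1) := by
          calc (n:ℝ) = (n:ℝ) * 1 := by ring
          _ ≤ (n:ℝ) * ((k:ℝ) * γ) := by
            apply mul_le_mul_of_nonneg_left hkγ (by positivity)
          _ = (k:ℝ) * ((n:ℝ) * γ) := by ring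
          _ ≤ (k:ℝ) * ((m:ℝ) + 1) := by
            apply mul_le_mul_of_nonneg_left hlt.le (by positivity)
        have : (n : ℝ) ≤ ((k * (m + 1) : ℕ) : ℝ) := by push_cast; linarith
        exact_mod_cast this
      calc x ^ n ≤ y ^ n := h1
      _ ≤ y ^ (k * (m + 1)) := pow_le_pow_right₀ hy1 h2
      _ = z ^ (m + 1) := by rw [hz, ← pow_mul]
    have hfactpos : (0:ℝ) < ((Nat.factorial (m - 1)) : ℝ) := by positivity
    calc x ^ n / Real.Gamma ((n:ℝ) * γ) ≤ z ^ (m + 1) / ((Nat.factorial (m - 1)) : ℝ) :=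
        div_le_div₀ (by positivity) hxn hfactpos hΓ
    _ = z ^ 2 * (z ^ (m - 1) / ((Nat.factorial (m - 1)) : ℝ)) := by
        rw [show m + 1 = 2 + (m - 1) by omega, pow_add]
        ring

/-- The iterated kernel in Henry's lemma. -/
private noncomputable def henryK (b γ : ℝ) (n : ℕ) (t s : ℝ) : ℝ≥0∞ :=
  ENNReal.ofReal ((b * Real.Gamma γ) ^ (n + 1) / Real.Gamma (((n : ℝ) + 1) * γ) *
    (t - s) ^ (((n : ℝ) + 1) * γ - 1))

private lemma henryK_measurable (b γ : ℝ) (n : ℕ) (t : ℝ) : Measurable (henryK b γ n t) := by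
  unfold henryK
  fun_prop

private lemma henryK_conv {b γ : ℝ} (hb : 0 ≤ b) (hγ : 0 < γ) (n : ℕ) {r t : ℝ} (hrt : r < t) :
    ∫⁻ s in Set.Ioo r t, henryK b γ n t s * ENNReal.ofReal b *
        ENNReal.ofReal ((s - r) ^ (γ - 1)) = henryK b γ (n + 1) t r := by
  set α : ℝ := ((n : ℝ) + 1) * γ with hα
  have hα0 : 0 < α := by positivity
  have hΓα : 0 < Real.Gamma α := Real.Gamma_pos_of_pos hα0
  have hG : 0 < Real.Gamma γ := Real.Gamma_pos_of_pos hγ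
  set c : ℝ := (b * Real.Gamma γ) ^ (n + 1) / Real.Gamma α with hc
  have hc0 : 0 ≤ c := by positivity
  have h1 : ∀ s ∈ Set.Ioo r t, henryK b γ n t s * ENNReal.ofReal b *
      ENNReal.ofReal ((s - r) ^ (γ - 1)) =
      ENNReal.ofReal (c * b) * ENNReal.ofReal ((s - r) ^ (γ - 1) * (t - s) ^ (α - 1)) := by
    intro s hs
    have e1 : (0:ℝ) ≤ (s - r) ^ (γ - 1) := Real.rpow_nonneg (by linarith [hs.1]) _
    have e2 : (0:ℝ) ≤ (t - s) ^ (α - 1) := Real.rpow_nonneg (by linarith [hs.2]) _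
    unfold henryK
    rw [← hα, ← hc]
    rw [← ENNReal.ofReal_mul (mul_nonneg hc0 e2), ← ENNReal.ofReal_mul
        (mul_nonneg (mul_nonneg hc0 e2) hb), ← ENNReal.ofReal_mul (mul_nonneg hc0 hb)]
    congr 1
    ring
  rw [setLIntegral_congr_fun measurableSet_Ioo h1]
  rw [lintegral_const_mul' _ _ ENNReal.ofReal_ne_top]
  rw [henry_beta_lintegral hα0 hγ hrt]
  rw [← ENNReal.ofReal_mul (by positivity)]
  unfold henryK
  congr 1
  have hcast : ((n + 1 : ℕ) : ℝ) + 1 = ((n : ℝ) + 1) + 1 := by push_cast; ring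
  rw [hcast]
  have hexp : (((n : ℝ) + 1) + 1) * γ = α + γ := by rw [hα]; ring
  rw [hexp]
  have hcoef : c * b * (Real.Gamma α * Real.Gamma γ / Real.Gamma (α + γ)) =
      (b * Real.Gamma γ) ^ (n + 1 + 1) / Real.Gamma (α + γ) := by
    rw [hc]
    field_simp
    ring
  rw [← mul_assoc, hcoef]

end HenryAux

/-- Henry's generalization of Grönwall's lemma to singular kernels (Lemma 2.5): for
`T ∈ (0,∞]`, `b ≥ 0`, `γ > 0` and measurable, locally integrable nonnegative
(extended-real-valued) `a, u` on `[0,T)` with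
`u(t) ≤ a(t) + b ∫_0^t (t−s)^{γ−1} u(s) ds` for `0 ≤ t < T`, one has
`u(t) ≤ a(t) + ∫_0^t [ ∑_{n=1}^∞ (bΓ(γ))^n / Γ(nγ) · (t−s)^{nγ−1} ] a(s) ds`
for all `0 ≤ t < T`. -/
theorem henry_gronwall_singular (T : ℝ≥0∞) (hT : 0 < T) (b γ : ℝ)
    (hb : 0 ≤ b) (hγ : 0 < γ)
    (a u : ℝ → ℝ≥0∞) (ha : Measurable a) (hu : Measurable u)
    (haloc : ∀ t : ℝ, 0 ≤ t → ENNReal.ofReal t < T → ∫⁻ s in Set.Icc 0 t, a s < ⊤)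
    (huloc : ∀ t : ℝ, 0 ≤ t → ENNReal.ofReal t < T → ∫⁻ s in Set.Icc 0 t, u s < ⊤)
    (hineq : ∀ t : ℝ, 0 ≤ t → ENNReal.ofReal t < T →
      u t ≤ a t + ENNReal.ofReal b *
        ∫⁻ s in Set.Ioc 0 t, ENNReal.ofReal ((t - s) ^ (γ - 1)) * u s) :
    ∀ t : ℝ, 0 ≤ t → ENNReal.ofReal t < T →
      u t ≤ a t + ∫⁻ s in Set.Ioc 0 t,
        (∑' n : ℕ, ENNReal.ofReal ((b * Real.Gamma γ) ^ (n + 1) /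
            Real.Gamma (((n : ℝ) + 1) * γ) * (t - s) ^ (((n : ℝ) + 1) * γ - 1))) * a s := by
  have hG : 0 < Real.Gamma γ := Real.Gamma_pos_of_pos hγ
  -- The key iterated inequality
  have key : ∀ N : ℕ, ∀ t : ℝ, 0 ≤ t → ENNReal.ofReal t < T →
      u t ≤ a t + (∑ n ∈ Finset.range N, ∫⁻ s in Set.Ioo 0 t, henryK b γ n t s * a s)
        + ∫⁻ s in Set.Ioo 0 t, henryK b γ N t s * u s := by
    intro N
    induction N with
    | zero =>
      intro t ht0 htT
      simp only [Finset.range_zero, Finset.sum_empty, add_zero]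
      refine (hineq t ht0 htT).trans (le_of_eq ?_)
      congr 1
      rw [← Measure.restrict_congr_set Ioo_ae_eq_Ioc]
      rw [← lintegral_const_mul' _ _ ENNReal.ofReal_ne_top]
      refine setLIntegral_congr_fun measurableSet_Ioo (fun s hs => ?_)
      unfold henryK
      have e1 : (0:ℝ) ≤ (t - s) ^ (γ - 1) := Real.rpow_nonneg (by linarith [hs.2]) _
      rw [← mul_assoc, ← ENNReal.ofReal_mul hb]
      refine congrArg (· * u s) (congrArg ENNReal.ofReal ?_)
      have h01 : ((0:ℕ):ℝ) + 1 = 1 := by norm_num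
      rw [h01, one_mul, pow_one, mul_div_assoc, div_self hG.ne', mul_one]
    | succ N ih =>
      intro t ht0 htT
      set F : ℝ → ℝ → ℝ≥0∞ := fun s r => henryK b γ N t s * ENNReal.ofReal b *
        ENNReal.ofReal ((s - r) ^ (γ - 1)) * u r with hF
      have hFm : Measurable (Function.uncurry F) := by
        rw [hF]
        unfold Function.uncurry henryK
        fun_prop
      have hstep : (∫⁻ s in Set.Ioo 0 t, henryK b γ N t s * u s)
          ≤ (∫⁻ s in Set.Ioo 0 t, henryK b γ N t s * a s)
            + ∫⁻ s in Set.Ioo 0 t, henryK b γ (N+1) t s * u s := by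
        have hpt : (∫⁻ s in Set.Ioo 0 t, henryK b γ N t s * u s) ≤
            ∫⁻ s in Set.Ioo 0 t, (henryK b γ N t s * a s +
              henryK b γ N t s * (ENNReal.ofReal b *
                ∫⁻ r in Set.Ioo 0 s, ENNReal.ofReal ((s - r) ^ (γ - 1)) * u r)) := by
          refine lintegral_mono_ae ?_
          filter_upwards [ae_restrict_mem measurableSet_Ioo] with s hs
          have husr := hineq s hs.1.le (lt_of_le_of_lt (ENNReal.ofReal_le_ofReal hs.2.le) htT)
          rw [← Measure.restrict_congr_set Ioo_ae_eq_Ioc] at husr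
          calc henryK b γ N t s * u s
              ≤ henryK b γ N t s * (a s + ENNReal.ofReal b *
                  ∫⁻ r in Set.Ioo 0 s, ENNReal.ofReal ((s - r) ^ (γ - 1)) * u r) :=
                mul_le_mul_right husr _
            _ = _ := mul_add _ _ _
        refine hpt.trans ?_
        rw [lintegral_add_left (f := fun s => henryK b γ N t s * a s) ((henryK_measurable b γ N t).mul ha)]
        refine add_le_add_right (le_of_eq ?_) _
        have e1 : ∀ s : ℝ, henryK b γ N t s * (ENNReal.ofReal b *
            ∫⁻ r in Set.Ioo 0 s, ENNReal.ofReal ((s - r) ^ (γ - 1)) * u r)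
            = ∫⁻ r in Set.Ioo 0 s, F s r := by
          intro s
          have hKne : henryK b γ N t s ≠ ⊤ := by unfold henryK; exact ENNReal.ofReal_ne_top
          rw [← mul_assoc, ← lintegral_const_mul' _ _
            (ENNReal.mul_ne_top hKne ENNReal.ofReal_ne_top)]
          exact lintegral_congr fun r => by rw [hF]; ring
        calc ∫⁻ s in Set.Ioo 0 t, henryK b γ N t s * (ENNReal.ofReal b *
              ∫⁻ r in Set.Ioo 0 s, ENNReal.ofReal ((s - r) ^ (γ - 1)) * u r)
            = ∫⁻ s in Set.Ioo 0 t, ∫⁻ r in Set.Ioo 0 s, F s r :=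
              lintegral_congr fun s => e1 s
          _ = ∫⁻ r in Set.Ioo 0 t, ∫⁻ s in Set.Ioo r t, F s r := henry_swap_triangle hFm t
          _ = ∫⁻ r in Set.Ioo 0 t, henryK b γ (N+1) t r * u r := by
              refine setLIntegral_congr_fun measurableSet_Ioo (fun r hr => ?_)
              have : (∫⁻ s in Set.Ioo r t, F s r) = (∫⁻ s in Set.Ioo r t,
                  henryK b γ N t s * ENNReal.ofReal b * ENNReal.ofReal ((s - r) ^ (γ - 1))) * u r := by
                rw [← lintegral_mul_const _ (f := fun s => henryK b γ N t s * ENNReal.ofReal b *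
                  ENNReal.ofReal ((s - r) ^ (γ - 1))) (((henryK_measurable b γ N t).mul
                  measurable_const).mul (by fun_prop : Measurable fun s : ℝ =>
                    ENNReal.ofReal ((s - r) ^ (γ - 1))))]
              rw [this, henryK_conv hb hγ N hr.2]
      calc u t ≤ a t + (∑ n ∈ Finset.range N, ∫⁻ s in Set.Ioo 0 t, henryK b γ n t s * a s)
            + ∫⁻ s in Set.Ioo 0 t, henryK b γ N t s * u s := ih t ht0 htT
        _ ≤ a t + (∑ n ∈ Finset.range N, ∫⁻ s in Set.Ioo 0 t, henryK b γ n t s * a s)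
            + ((∫⁻ s in Set.Ioo 0 t, henryK b γ N t s * a s)
              + ∫⁻ s in Set.Ioo 0 t, henryK b γ (N+1) t s * u s) := add_le_add_right hstep _
        _ = _ := by rw [Finset.sum_range_succ]; ring
  -- Now pass to the limit
  intro t ht0 htT
  rcases eq_or_lt_of_le ht0 with h0 | h0
  · have h := hineq t ht0 htT
    rw [← h0] at h ⊢
    simpa using h
  · set C : ℝ≥0∞ := ∫⁻ s in Set.Icc 0 t, u s with hCdef
    have hC : C ≠ ⊤ := (huloc t ht0 htT).ne
    set S : ℝ≥0∞ := ∫⁻ s in Set.Ioo 0 t, (∑' n : ℕ, henryK b γ n t s) * a s with hSdef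
    have hSN : ∀ N : ℕ,
        (∑ n ∈ Finset.range N, ∫⁻ s in Set.Ioo 0 t, henryK b γ n t s * a s) ≤ S := by
      intro N
      rw [← lintegral_finset_sum _ (f := fun n s => henryK b γ n t s * a s) (fun n _ => (henryK_measurable b γ n t).mul ha)]
      refine lintegral_mono fun s => ?_
      rw [← Finset.sum_mul]
      exact mul_le_mul_left (ENNReal.sum_le_tsum _) _
    set ρ : ℕ → ℝ := fun N => (b * Real.Gamma γ) ^ (N + 1) /
      Real.Gamma (((N : ℝ) + 1) * γ) * t ^ (((N : ℝ) + 1) * γ - 1) with hρdef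
    have hRb : ∀ N : ℕ, 0 ≤ ((N : ℝ) + 1) * γ - 1 →
        (∫⁻ s in Set.Ioo 0 t, henryK b γ N t s * u s) ≤ ENNReal.ofReal (ρ N) * C := by
      intro N he
      calc ∫⁻ s in Set.Ioo 0 t, henryK b γ N t s * u s
          ≤ ∫⁻ s in Set.Ioo 0 t, ENNReal.ofReal (ρ N) * u s := by
            refine lintegral_mono_ae ?_
            filter_upwards [ae_restrict_mem measurableSet_Ioo] with s hs
            refine mul_le_mul_left ?_ _
            unfold henryK
            apply ENNReal.ofReal_le_ofReal
            have h1 : (t - s) ^ (((N:ℝ)+1)*γ-1) ≤ t ^ (((N:ℝ)+1)*γ-1) :=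
              Real.rpow_le_rpow (by linarith [hs.2]) (by linarith [hs.1]) he
            have hcoef : 0 ≤ (b * Real.Gamma γ) ^ (N+1) / Real.Gamma (((N:ℝ)+1)*γ) := by
              have := Real.Gamma_pos_of_pos (show (0:ℝ) < ((N:ℝ)+1)*γ by positivity)
              positivity
            exact mul_le_mul_of_nonneg_left h1 hcoef
        _ = ENNReal.ofReal (ρ N) * ∫⁻ s in Set.Ioo 0 t, u s :=
            lintegral_const_mul' _ _ ENNReal.ofReal_ne_top
        _ ≤ ENNReal.ofReal (ρ N) * C :=
            mul_le_mul_right (lintegral_mono_set Set.Ioo_subset_Icc_self) _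
    have hρ0 : Filter.Tendsto (fun N => ENNReal.ofReal (ρ N) * C) Filter.atTop (nhds 0) := by
      have hreal : Filter.Tendsto ρ Filter.atTop (nhds 0) := by
        set x : ℝ := b * Real.Gamma γ * t ^ γ with hxdef
        have hx : 0 ≤ x := by positivity
        have h1 := ((henry_tendsto_pow_div_Gamma hx hγ).comp
          (Filter.tendsto_add_atTop_nat 1)).mul_const t⁻¹
        rw [zero_mul] at h1
        refine h1.congr fun N => ?_
        have hcast : ((N + 1 : ℕ) : ℝ) = (N : ℝ) + 1 := by push_cast; ring
        have ht' : (0:ℝ) < t := h0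
        have hrw : t ^ (((N : ℝ) + 1) * γ - 1) = (t ^ γ) ^ (N + 1) * t⁻¹ := by
          rw [Real.rpow_sub ht', Real.rpow_one, div_eq_mul_inv, mul_comm ((N:ℝ)+1) γ,
            Real.rpow_mul ht'.le, ← Real.rpow_natCast (t ^ γ) (N+1)]
          push_cast
          ring_nf
        show x ^ (N + 1) / Real.Gamma (((N + 1 : ℕ) : ℝ) * γ) * t⁻¹ = ρ N
        simp only [hρdef, hxdef, hcast, hrw, mul_pow]
        ring
      have := ENNReal.Tendsto.mul_const (ENNReal.tendsto_ofReal hreal) (Or.inr hC)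
      simpa using this
    have hev : ∀ᶠ N : ℕ in Filter.atTop, u t ≤ a t + S + ENNReal.ofReal (ρ N) * C := by
      have h1 : ∀ᶠ N : ℕ in Filter.atTop, (1:ℝ)/γ ≤ (N : ℝ) + 1 := by
        filter_upwards [(tendsto_natCast_atTop_atTop (R := ℝ)).eventually_ge_atTop (1/γ)]
          with N hN
        linarith
      filter_upwards [h1] with N hN
      have he : 0 ≤ ((N:ℝ)+1)*γ - 1 := by
        have := mul_le_mul_of_nonneg_right hN hγ.le
        rw [one_div, inv_mul_cancel₀ hγ.ne'] at this
        linarith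
      calc u t ≤ a t + (∑ n ∈ Finset.range N, ∫⁻ s in Set.Ioo 0 t, henryK b γ n t s * a s)
            + ∫⁻ s in Set.Ioo 0 t, henryK b γ N t s * u s := key N t ht0 htT
        _ ≤ a t + S + ENNReal.ofReal (ρ N) * C :=
            add_le_add (add_le_add_right (hSN N) _) (hRb N he)
    have hlim : Filter.Tendsto (fun N => a t + S + ENNReal.ofReal (ρ N) * C)
        Filter.atTop (nhds (a t + S)) := by
      have := Filter.Tendsto.const_add (a t + S) hρ0
      simpa using this
    have hfinal : u t ≤ a t + S := ge_of_tendsto hlim hev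
    refine hfinal.trans (le_of_eq ?_)
    congr 1
    rw [hSdef, Measure.restrict_congr_set Ioo_ae_eq_Ioc]
    simp only [henryK]
end
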